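/- For integers 2 ≤ k with n ≥ 2k, the number f(n,k) of standard Young tableaux of n cells whose (1,2) entry is k satisfies f(n,k) = Σ_{j=0}^{k−1} C(n−k, k−j−1)·t_{n−2k+j+2} − C(n−k, k−1)·t_{n−2k+1} − C(n−k, k)·t_{n−2k}. -/

import Mathlib

/-- A standard Young tableau of `n` cells, encoded as the chain of Young diagrams
`chain i` = shape formed by the cells containing the entries `1,…,i`. -/
structure SYT (n : ℕ) where
  chain : ℕ → YoungDiagram
  mono : Monotone chain
  card_eq : ∀ i ≤ n, (chain i).card = i
  stable : ∀ i, n ≤ i → chain i = chain n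

/-- `f(n,k)`: the number of standard Young tableaux of `n` cells whose `(1,2)` entry
(0-indexed cell `(0,1)`) is `k`. -/
noncomputable def f12 (n k : ℕ) : ℕ :=
  Nat.card {T : SYT n // (0, 1) ∈ T.chain k ∧ (0, 1) ∉ T.chain (k - 1)}

/-- `t_n`, the number of involutions of `[n]` (with `t_0 = 1`). -/
noncomputable def tInv (n : ℕ) : ℕ := Nat.card {φ : Equiv.Perm (Fin n) // φ * φ = 1}

/-!
Deleting the entries `1, …, k` of a tableau counted by `f(n,k)` leaves the hook `(2, 1^(k-2))`
(the entries `1, …, k-1` fill the first column and `k` sits in cell `(1,2)`) followed by a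
saturated chain of length `m = n - k` upwards in Young's lattice, so `f(n,k)` is the number
`E_m(hook)` of up-walks of length `m` from the hook. The down and up operators of Young's lattice
satisfy `DU = UD + I`; moving the down-steps to the front yields
`E_{m+2}(μ) = E_{m+1}(μ) + Σ_r E_{m+1}(μ - r) + (m+1) E_m(μ)`, whose solution is
`E_m(μ) = Σ_j C(m,j) t_{m-j} d_j(μ)`, where `d_j(μ)` counts the down-walks of length `j`
from `μ`. For the hook `(2, 1^K)`, `d_j = min(j+1, K+1)` for `j ≤ K + 2` and `d_j = 0` beyond;
the recurrence `t_{i+1} = t_i + i t_{i-1}` then turns the resulting sum into the stated one.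
-/

section Involutions

open Equiv Equiv.Perm

theorem tInv_card (α : Type*) [Fintype α] :
    tInv (Fintype.card α) = Nat.card {φ : Perm α // φ * φ = 1} :=
  Nat.card_congr <| (Fintype.equivFin α).symm.permCongrHom.toEquiv.subtypeEquiv fun φ => by
    rw [MulEquiv.toEquiv_eq_coe, MulEquiv.coe_toEquiv, ← map_mul, MulEquiv.map_eq_one_iff]

variable {α : Type*}

theorem card_involutions_fixing [Fintype α] (p : α → Prop) [DecidablePred p] :
    Nat.card {φ : Perm α // φ * φ = 1 ∧ ∀ a, ¬p a → φ a = a} =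
      tInv (Fintype.card (Subtype p)) := by
  rw [tInv_card]
  refine Nat.card_congr ((((Perm.subtypeEquivSubtypePerm p).subtypeEquiv
    (q := fun f => f.1 * f.1 = 1) fun σ => ?_).trans
      (subtypeSubtypeEquivSubtypeInter (fun f : Perm α => ∀ a, ¬p a → f a = a)
        fun f => f * f = 1)).trans
    (subtypeEquivRight fun φ => and_comm)).symm
  simp only [Perm.subtypeEquivSubtypePerm_apply_coe, ← map_mul,
    map_eq_one_iff _ ofSubtype_injective]

theorem card_involutions_eq_sum_fiber [Fintype α] (a : α) :
    Nat.card {φ : Perm α // φ * φ = 1} =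
      ∑ b, Nat.card {φ : Perm α // φ * φ = 1 ∧ φ a = b} := by
  rw [← Nat.card_congr (sigmaFiberEquiv fun φ : {φ : Perm α // φ * φ = 1} => φ.1 a),
    Nat.card_sigma]
  exact Finset.sum_congr rfl fun b _ =>
    Nat.card_congr (subtypeSubtypeEquivSubtypeInter (fun φ : Perm α => φ * φ = 1) (· a = b))

variable [DecidableEq α]

theorem mul_swap_mul_self_eq_one {φ : Perm α} (hφ : φ * φ = 1) {a b : α}
    (h : swap (φ a) (φ b) = swap a b) : (φ * swap a b) * (φ * swap a b) = 1 := by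
  rw [swap_apply_apply, inv_eq_of_mul_eq_one_right hφ] at h
  rw [← mul_assoc, h, swap_mul_self]

def involutionsApplyEqEquiv {a b : α} :
    {φ : Perm α // φ * φ = 1 ∧ φ a = b} ≃
      {ψ : Perm α // ψ * ψ = 1 ∧ ∀ x, ¬(x ≠ a ∧ x ≠ b) → ψ x = x} where
  toFun φ := ⟨φ.1 * swap a b, by
    obtain ⟨φ, hφ, rfl⟩ := φ
    have hφb : φ (φ a) = a := by rw [← Perm.mul_apply, hφ, Perm.one_apply]
    refine ⟨mul_swap_mul_self_eq_one hφ (by rw [hφb, swap_comm]), fun x hx => ?_⟩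
    obtain rfl | rfl := not_and_or.mp hx |>.imp not_not.mp not_not.mp
    · simp [hφb]
    · simp⟩
  invFun ψ := ⟨ψ.1 * swap a b, by
    obtain ⟨ψ, hψ, hfix⟩ := ψ
    have ha : ψ a = a := hfix a (by simp)
    have hb : ψ b = b := hfix b (by simp)
    exact ⟨mul_swap_mul_self_eq_one hψ (by rw [ha, hb]), by simp [hb]⟩⟩
  left_inv φ := Subtype.ext <| by simp [mul_assoc]
  right_inv ψ := Subtype.ext <| by simp [mul_assoc]

theorem tInv_add_two (m : ℕ) : tInv (m + 2) = tInv (m + 1) + (m + 1) * tInv m := by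
  have h := tInv_card (Fin (m + 2))
  rw [Fintype.card_fin] at h
  rw [h, card_involutions_eq_sum_fiber 0, Fin.sum_univ_succ]
  have hfix : Nat.card {φ : Perm (Fin (m + 2)) // φ * φ = 1 ∧ φ 0 = 0} = tInv (m + 1) := by
    have hcard : Fintype.card {x : Fin (m + 2) // x ≠ 0} = m + 1 := by
      simp [Fintype.card_subtype, Finset.filter_ne']
    rw [← hcard, ← card_involutions_fixing]
    exact Nat.card_congr (subtypeEquivRight fun φ => by simp)
  have hswap (q : Fin (m + 1)) :
      Nat.card {φ : Perm (Fin (m + 2)) // φ * φ = 1 ∧ φ 0 = q.succ} = tInv m := by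
    rw [Nat.card_congr involutionsApplyEqEquiv, card_involutions_fixing]
    simp [Fintype.card_subtype, Finset.filter_and, Finset.filter_ne', (Fin.succ_ne_zero q).symm]
  rw [hfix, Finset.sum_congr rfl fun q _ => hswap q, Finset.sum_const, Finset.card_univ,
    Fintype.card_fin, smul_eq_mul]

end Involutions

theorem tInv_zero : tInv 0 = 1 := by
  rw [tInv, Nat.card_eq_fintype_card]
  decide

theorem tInv_one : tInv 1 = 1 := by
  rw [tInv, Nat.card_eq_fintype_card]
  decide

theorem tInv_succ (m : ℕ) : tInv (m + 1) = tInv m + m * tInv (m - 1) := by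
  cases m with
  | zero => simp [tInv_zero, tInv_one]
  | succ m => exact tInv_add_two m

theorem choose_mul_tInv_add_two (m j : ℕ) :
    (m + 2).choose (j + 1) * tInv (m + 1 - j) =
      (m + 1).choose (j + 1) * tInv (m - j) + (m + 1).choose j * tInv (m + 1 - j) +
        (m + 1) * (m.choose (j + 1) * tInv (m - (j + 1))) := by
  rcases Nat.lt_or_ge m j with hlt | hle
  · rw [Nat.choose_succ_succ (m + 1) j, Nat.choose_eq_zero_of_lt (by omega : m + 1 < j + 1),
      Nat.choose_eq_zero_of_lt (by omega : m < j + 1)]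
    ring
  · have ht : tInv (m + 1 - j) = tInv (m - j) + (m - j) * tInv (m - (j + 1)) := by
      rw [show m + 1 - j = m - j + 1 by omega, tInv_succ, Nat.sub_sub]
    have hc : (m + 1).choose (j + 1) * (m - j) = (m + 1) * m.choose (j + 1) := by
      rw [← Nat.succ_sub_succ, Nat.mul_comm (m + 1), Nat.choose_mul_succ_eq]
    rw [Nat.choose_succ_succ (m + 1) j, ht]
    linear_combination (tInv (m - (j + 1))) * hc

theorem sum_choose_mul_tInv_add_two {m N : ℕ} (hN : m + 1 < N) (d : ℕ → ℕ) :
    ∑ j ∈ Finset.range (N + 1), (m + 2).choose j * tInv (m + 2 - j) * d j =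
      ∑ j ∈ Finset.range (N + 1), (m + 1).choose j * tInv (m + 1 - j) * d j +
        ∑ j ∈ Finset.range (N + 1), (m + 1).choose j * tInv (m + 1 - j) * d (j + 1) +
        (m + 1) * ∑ j ∈ Finset.range (N + 1), m.choose j * tInv (m - j) * d j := by
  have hlast : ∑ j ∈ Finset.range (N + 1), (m + 1).choose j * tInv (m + 1 - j) * d (j + 1) =
      ∑ j ∈ Finset.range N, (m + 1).choose j * tInv (m + 1 - j) * d (j + 1) := by
    rw [Finset.sum_range_succ, Nat.choose_eq_zero_of_lt hN, zero_mul, zero_mul, add_zero]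
  have hcoeff (j : ℕ) : (m + 2).choose (j + 1) * tInv (m + 2 - (j + 1)) * d (j + 1) =
      (m + 1).choose (j + 1) * tInv (m + 1 - (j + 1)) * d (j + 1) +
        (m + 1).choose j * tInv (m + 1 - j) * d (j + 1) +
        (m + 1) * (m.choose (j + 1) * tInv (m - (j + 1)) * d (j + 1)) := by
    rw [Nat.add_sub_add_right, show m + 2 - (j + 1) = m + 1 - j by omega,
      choose_mul_tInv_add_two]
    ring
  rw [hlast, Finset.sum_range_succ', Finset.sum_range_succ', Finset.sum_range_succ',
    Finset.sum_congr rfl fun j _ => hcoeff j, Finset.sum_add_distrib, Finset.sum_add_distrib,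
    ← Finset.mul_sum]
  simp only [Nat.choose_zero_right, Nat.sub_zero, tInv_add_two]
  ring

theorem sum_range_add_succ_mul (a : ℕ → ℕ) (N : ℕ) :
    ∑ i ∈ Finset.range N, (a i + (i + 1) * a (i + 1)) =
      ∑ i ∈ Finset.range N, (i + 1) * a i + N * a N := by
  induction N with
  | zero => simp
  | succ N ih =>
    rw [Finset.sum_range_succ, ih, Finset.sum_range_succ]
    ring

theorem choose_mul_tInv_sub_add_one (m i : ℕ) :
    m.choose i * tInv (m - i + 1) =
      m.choose i * tInv (m - i) + (i + 1) * (m.choose (i + 1) * tInv (m - (i + 1))) := by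
  rw [tInv_succ, Nat.sub_sub, mul_add, ← mul_assoc, ← mul_assoc, Nat.mul_comm (i + 1),
    Nat.choose_succ_right_eq]

theorem sum_choose_mul_tInv_mul_min (m K : ℕ) :
    ∑ j ∈ Finset.range (K + 3), m.choose j * tInv (m - j) * min (j + 1) (K + 1) +
        m.choose (K + 1) * tInv (m - (K + 1)) + m.choose (K + 2) * tInv (m - (K + 2)) =
      ∑ i ∈ Finset.range (K + 2), m.choose i * tInv (m - i + 1) := by
  simp only [choose_mul_tInv_sub_add_one, sum_range_add_succ_mul fun i => m.choose i * tInv (m - i)]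
  rw [Finset.sum_range_succ, Finset.sum_range_succ, Finset.sum_range_succ _ (K + 1),
    Finset.sum_congr rfl fun j hj => by rw [min_eq_left (by simp at hj; omega), mul_comm]]
  rw [min_eq_right (by omega : K + 1 ≤ K + 1 + 1), min_eq_right (by omega : K + 1 ≤ K + 2 + 1)]
  ring

namespace YoungDiagram

section Corners

def IsAddable (μ : YoungDiagram) (c : ℕ × ℕ) : Prop :=
  c ∉ μ ∧ (c.1 = 0 ∨ (c.1 - 1, c.2) ∈ μ) ∧ (c.2 = 0 ∨ (c.1, c.2 - 1) ∈ μ)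

def IsRemovable (μ : YoungDiagram) (c : ℕ × ℕ) : Prop :=
  c ∈ μ ∧ (c.1 + 1, c.2) ∉ μ ∧ (c.1, c.2 + 1) ∉ μ

instance (μ : YoungDiagram) : DecidablePred μ.IsAddable := fun _ => by
  unfold IsAddable; infer_instance

instance (μ : YoungDiagram) : DecidablePred μ.IsRemovable := fun _ => by
  unfold IsRemovable; infer_instance

variable {μ : YoungDiagram} {a r : ℕ × ℕ}

theorem isLowerSet_insert_of_isAddable (h : μ.IsAddable a) :
    IsLowerSet (↑(insert a μ.cells) : Set (ℕ × ℕ)) := by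
  obtain ⟨-, h₁, h₂⟩ := h
  intro y x hxy hy
  simp only [Finset.coe_insert, Set.mem_insert_iff, Finset.mem_coe, mem_cells] at hy ⊢
  obtain ⟨hx₁, hx₂⟩ : x.1 ≤ y.1 ∧ x.2 ≤ y.2 := ⟨hxy.1, hxy.2⟩
  rcases hy with rfl | hy
  · rcases eq_or_ne x y with rfl | hne
    · exact Or.inl rfl
    right
    rcases Nat.lt_or_ge x.1 y.1 with hlt | hge
    · exact μ.up_left_mem (by omega) hx₂ (h₁.resolve_left (by omega))
    · have : x.2 < y.2 := by
        by_contra!; exact hne (Prod.ext (by omega) (by omega))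
      exact μ.up_left_mem hx₁ (by omega) (h₂.resolve_left (by omega))
  · exact Or.inr (μ.isLowerSet hxy hy)

theorem isLowerSet_erase_of_isRemovable (h : μ.IsRemovable r) :
    IsLowerSet (↑(μ.cells.erase r) : Set (ℕ × ℕ)) := by
  obtain ⟨-, h₁, h₂⟩ := h
  intro y x hxy hy
  simp only [Finset.coe_erase, Set.mem_sdiff, Finset.mem_coe, mem_cells,
    Set.mem_singleton_iff] at hy ⊢
  refine ⟨μ.isLowerSet hxy hy.1, ?_⟩
  rintro rfl
  obtain ⟨hx₁, hx₂⟩ : x.1 ≤ y.1 ∧ x.2 ≤ y.2 := ⟨hxy.1, hxy.2⟩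
  rcases Nat.lt_or_ge x.1 y.1 with hlt | hge
  · exact h₁ (μ.up_left_mem (by omega) hx₂ hy.1)
  · rcases Nat.lt_or_ge x.2 y.2 with hlt | hge'
    · exact h₂ (μ.up_left_mem hx₁ (by omega) hy.1)
    · exact hy.2 (Prod.ext (by omega) (by omega))

/-- Junk value `μ` when `a` is not addable. -/
def addCell (μ : YoungDiagram) (a : ℕ × ℕ) : YoungDiagram :=
  if h : μ.IsAddable a then ⟨insert a μ.cells, isLowerSet_insert_of_isAddable h⟩ else μ

/-- Junk value `μ` when `r` is not removable. -/
def removeCell (μ : YoungDiagram) (r : ℕ × ℕ) : YoungDiagram :=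
  if h : μ.IsRemovable r then ⟨μ.cells.erase r, isLowerSet_erase_of_isRemovable h⟩ else μ

theorem cells_addCell (h : μ.IsAddable a) : (μ.addCell a).cells = insert a μ.cells := by
  rw [addCell, dif_pos h]

theorem cells_removeCell (h : μ.IsRemovable r) : (μ.removeCell r).cells = μ.cells.erase r := by
  rw [removeCell, dif_pos h]

theorem mem_addCell (h : μ.IsAddable a) {x : ℕ × ℕ} :
    x ∈ μ.addCell a ↔ x = a ∨ x ∈ μ := by
  rw [← mem_cells, cells_addCell h, Finset.mem_insert, mem_cells]

theorem mem_removeCell (h : μ.IsRemovable r) {x : ℕ × ℕ} :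
    x ∈ μ.removeCell r ↔ x ≠ r ∧ x ∈ μ := by
  rw [← mem_cells, cells_removeCell h, Finset.mem_erase, mem_cells]

theorem card_addCell (h : μ.IsAddable a) : (μ.addCell a).card = μ.card + 1 := by
  rw [YoungDiagram.card, cells_addCell h, Finset.card_insert_of_notMem h.1]

theorem card_removeCell (h : μ.IsRemovable r) : (μ.removeCell r).card = μ.card - 1 := by
  rw [YoungDiagram.card, cells_removeCell h, Finset.card_erase_of_mem h.1]

theorem le_addCell (h : μ.IsAddable a) : μ ≤ μ.addCell a := fun _ hx =>
  (mem_addCell h).mpr (Or.inr hx)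

theorem addCell_injective_of_isAddable {a' : ℕ × ℕ} (h : μ.IsAddable a) (h' : μ.IsAddable a')
    (he : μ.addCell a = μ.addCell a') : a = a' := by
  have : a ∈ μ.addCell a' := he ▸ (mem_addCell h).mpr (Or.inl rfl)
  exact ((mem_addCell h').mp this).resolve_right h.1

theorem isRemovable_addCell (h : μ.IsAddable a) : (μ.addCell a).IsRemovable a := by
  refine ⟨(mem_addCell h).mpr (Or.inl rfl), ?_, ?_⟩ <;> rw [mem_addCell h] <;>
    rintro (he | hmem)
  · simp [Prod.ext_iff] at he
  · exact h.1 (μ.up_left_mem (Nat.le_succ _) le_rfl hmem)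
  · simp [Prod.ext_iff] at he
  · exact h.1 (μ.up_left_mem le_rfl (Nat.le_succ _) hmem)

theorem isAddable_removeCell (h : μ.IsRemovable r) : (μ.removeCell r).IsAddable r := by
  refine ⟨fun hr => ((mem_removeCell h).mp hr).1 rfl, ?_, ?_⟩ <;> rw [mem_removeCell h] <;>
    refine (Nat.eq_zero_or_pos _).imp_right fun hpos => ⟨fun he => ?_, ?_⟩
  · simp [Prod.ext_iff] at he; omega
  · exact μ.up_left_mem (Nat.sub_le _ _) le_rfl h.1
  · simp [Prod.ext_iff] at he; omega
  · exact μ.up_left_mem le_rfl (Nat.sub_le _ _) h.1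

theorem removeCell_addCell (h : μ.IsAddable a) : (μ.addCell a).removeCell a = μ :=
  YoungDiagram.ext <| by
    rw [cells_removeCell (isRemovable_addCell h), cells_addCell h, Finset.erase_insert h.1]

theorem addCell_removeCell (h : μ.IsRemovable r) : (μ.removeCell r).addCell r = μ :=
  YoungDiagram.ext <| by
    rw [cells_addCell (isAddable_removeCell h), cells_removeCell h, Finset.insert_erase h.1]

theorem isRemovable_of_isRemovable_addCell (ha : μ.IsAddable a)
    (hr : (μ.addCell a).IsRemovable r) (hne : r ≠ a) : μ.IsRemovable r :=
  ⟨((mem_addCell ha).mp hr.1).resolve_left hne,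
    fun h => hr.2.1 ((mem_addCell ha).mpr (Or.inr h)),
    fun h => hr.2.2 ((mem_addCell ha).mpr (Or.inr h))⟩

theorem isAddable_removeCell_of_isRemovable_addCell (ha : μ.IsAddable a)
    (hr : (μ.addCell a).IsRemovable r) (hne : r ≠ a) : (μ.removeCell r).IsAddable a := by
  have hr' := isRemovable_of_isRemovable_addCell ha hr hne
  refine ⟨fun h => ha.1 ((mem_removeCell hr').mp h).2, ?_, ?_⟩
  · refine ha.2.1.imp_right fun h => (mem_removeCell hr').mpr ⟨?_, h⟩
    rintro rfl
    obtain ⟨_ | a₁, a₂⟩ := a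
    · exact hne rfl
    · exact hr.2.1 ((mem_addCell ha).mpr (Or.inl rfl))
  · refine ha.2.2.imp_right fun h => (mem_removeCell hr').mpr ⟨?_, h⟩
    rintro rfl
    obtain ⟨a₁, _ | a₂⟩ := a
    · exact hne rfl
    · exact hr.2.2 ((mem_addCell ha).mpr (Or.inl rfl))

theorem isAddable_of_isAddable_removeCell (hr : μ.IsRemovable r)
    (ha : (μ.removeCell r).IsAddable a) (hne : a ≠ r) : μ.IsAddable a :=
  ⟨fun h => ha.1 ((mem_removeCell hr).mpr ⟨hne, h⟩),
    ha.2.1.imp_right fun h => ((mem_removeCell hr).mp h).2,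
    ha.2.2.imp_right fun h => ((mem_removeCell hr).mp h).2⟩

theorem isRemovable_addCell_of_isAddable_removeCell (hr : μ.IsRemovable r)
    (ha : (μ.removeCell r).IsAddable a) (hne : a ≠ r) : (μ.addCell a).IsRemovable r := by
  have ha' := isAddable_of_isAddable_removeCell hr ha hne
  have hr_not : r ∉ μ.removeCell r := fun h => ((mem_removeCell hr).mp h).1 rfl
  refine ⟨(mem_addCell ha').mpr (Or.inr hr.1), ?_, ?_⟩ <;> rw [mem_addCell ha'] <;>
    rintro (rfl | h)
  · exact hr_not (ha.2.1.resolve_left (Nat.succ_ne_zero _))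
  · exact hr.2.1 h
  · exact hr_not (ha.2.2.resolve_left (Nat.succ_ne_zero _))
  · exact hr.2.2 h

theorem removeCell_addCell_comm (ha : μ.IsAddable a) (hr : μ.IsRemovable r)
    (hr' : (μ.addCell a).IsRemovable r) (ha' : (μ.removeCell r).IsAddable a) (hne : a ≠ r) :
    (μ.addCell a).removeCell r = (μ.removeCell r).addCell a :=
  YoungDiagram.ext <| by
    rw [cells_removeCell hr', cells_addCell ha, cells_addCell ha', cells_removeCell hr,
      Finset.erase_insert_of_ne hne]

theorem isAddable_iff_rowLen {i j : ℕ} :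
    μ.IsAddable (i, j) ↔ j = μ.rowLen i ∧ (i = 0 ∨ μ.rowLen i < μ.rowLen (i - 1)) := by
  simp only [IsAddable, mem_iff_lt_rowLen, not_lt]
  constructor
  · rintro ⟨h₁, h₂, h₃⟩
    exact ⟨by omega, h₂.imp_right (by omega)⟩
  · rintro ⟨rfl, h⟩
    exact ⟨le_rfl, h.imp_right id, (Nat.eq_zero_or_pos _).imp_right (by omega)⟩

theorem isRemovable_iff_rowLen {i j : ℕ} :
    μ.IsRemovable (i, j) ↔ j + 1 = μ.rowLen i ∧ μ.rowLen (i + 1) < μ.rowLen i := by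
  simp only [IsRemovable, mem_iff_lt_rowLen, not_lt]
  omega

def removables (μ : YoungDiagram) : Finset (ℕ × ℕ) :=
  μ.cells.filter μ.IsRemovable

theorem mem_removables {r : ℕ × ℕ} : r ∈ μ.removables ↔ μ.IsRemovable r :=
  Finset.mem_filter.trans ⟨And.right, fun h => ⟨h.1, h⟩⟩

/-- Apart from the end of the first row, the addable cells are the ends of the rows just
below the removable cells. -/
def addables (μ : YoungDiagram) : Finset (ℕ × ℕ) :=
  insert (0, μ.rowLen 0) (μ.removables.image fun r => (r.1 + 1, μ.rowLen (r.1 + 1)))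

theorem mem_addables {c : ℕ × ℕ} : c ∈ μ.addables ↔ μ.IsAddable c := by
  obtain ⟨i, j⟩ := c
  simp only [addables, Finset.mem_insert, Finset.mem_image, mem_removables, Prod.mk.injEq,
    isAddable_iff_rowLen, isRemovable_iff_rowLen, Prod.exists]
  constructor
  · rintro (⟨rfl, rfl⟩ | ⟨i', j', ⟨-, hlt⟩, rfl, rfl⟩)
    · exact ⟨rfl, Or.inl rfl⟩
    · exact ⟨rfl, Or.inr (by simpa using hlt)⟩
  · rintro ⟨rfl, rfl | hlt⟩
    · exact Or.inl ⟨rfl, rfl⟩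
    · right
      obtain _ | i := i
      · simp at hlt
      · exact ⟨i, μ.rowLen i - 1, ⟨by simp at hlt; omega, by simpa using hlt⟩, rfl, rfl⟩

theorem card_addables (μ : YoungDiagram) : μ.addables.card = μ.removables.card + 1 := by
  rw [addables, Finset.card_insert_of_notMem (by simp), Finset.card_image_of_injOn]
  rintro ⟨i, j⟩ hr ⟨i', j'⟩ hr' he
  simp only [Finset.mem_coe, mem_removables, isRemovable_iff_rowLen, Prod.mk.injEq] at hr hr' he
  obtain rfl : i = i' := by omega
  exact Prod.ext rfl (by omega)

end Corners

/-- Walks in Young's lattice from `μ` following the word `w`: `true` adds a cell, `false`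
removes one. -/
def walkCount : List Bool → YoungDiagram → ℕ
  | [], _ => 1
  | true :: w, μ => ∑ a ∈ μ.addables, walkCount w (μ.addCell a)
  | false :: w, μ => ∑ r ∈ μ.removables, walkCount w (μ.removeCell r)

theorem walkCount_append_of_eq_add {u v x : List Bool}
    (h : ∀ μ, walkCount u μ = walkCount v μ + walkCount x μ) (w : List Bool)
    (μ : YoungDiagram) :
    walkCount (w ++ u) μ = walkCount (w ++ v) μ + walkCount (w ++ x) μ := by
  induction w generalizing μ with
  | nil => exact h μ
  | cons b w ih =>
    cases b <;> simp only [List.cons_append, walkCount, ← Finset.sum_add_distrib, ih]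

theorem walkCount_append_true (w : List Bool) (μ : YoungDiagram) :
    walkCount (w ++ [true]) μ = walkCount (w ++ [false]) μ + walkCount w μ := by
  simpa using walkCount_append_of_eq_add (u := [true]) (v := [false]) (x := []) (fun μ => by
    simp [walkCount, card_addables]) w μ

theorem sum_addables_sum_removables_erase (f : YoungDiagram → ℕ) (μ : YoungDiagram) :
    ∑ a ∈ μ.addables, ∑ r ∈ (μ.addCell a).removables.erase a,
        f ((μ.addCell a).removeCell r) =
      ∑ r ∈ μ.removables, ∑ a ∈ (μ.removeCell r).addables.erase r,
        f ((μ.removeCell r).addCell a) := by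
  rw [Finset.sum_sigma', Finset.sum_sigma']
  refine Finset.sum_nbij' (fun p => ⟨p.2, p.1⟩) (fun p => ⟨p.2, p.1⟩) ?_ ?_ (fun _ _ => rfl)
    (fun _ _ => rfl) ?_
  · rintro ⟨a, r⟩ hp
    simp only [Finset.mem_sigma, Finset.mem_erase, mem_addables, mem_removables] at hp ⊢
    obtain ⟨ha, hne, hr⟩ := hp
    exact ⟨isRemovable_of_isRemovable_addCell ha hr hne, hne.symm,
      isAddable_removeCell_of_isRemovable_addCell ha hr hne⟩
  · rintro ⟨r, a⟩ hp
    simp only [Finset.mem_sigma, Finset.mem_erase, mem_addables, mem_removables] at hp ⊢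
    obtain ⟨hr, hne, ha⟩ := hp
    exact ⟨isAddable_of_isAddable_removeCell hr ha hne, hne.symm,
      isRemovable_addCell_of_isAddable_removeCell hr ha hne⟩
  · rintro ⟨a, r⟩ hp
    simp only [Finset.mem_sigma, Finset.mem_erase, mem_addables, mem_removables] at hp
    obtain ⟨ha, hne, hr⟩ := hp
    have hr' := isRemovable_of_isRemovable_addCell ha hr hne
    rw [removeCell_addCell_comm ha hr' hr (isAddable_removeCell_of_isRemovable_addCell ha hr hne)
      hne.symm]

/-- The relation `DU = UD + I` of Young's lattice. -/
theorem walkCount_true_false (w : List Bool) (μ : YoungDiagram) :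
    walkCount (true :: false :: w) μ = walkCount (false :: true :: w) μ + walkCount w μ := by
  have hU : ∀ a ∈ μ.addables, walkCount (false :: w) (μ.addCell a) =
      walkCount w μ + ∑ r ∈ (μ.addCell a).removables.erase a,
        walkCount w ((μ.addCell a).removeCell r) := fun a ha => by
    have ha := mem_addables.mp ha
    rw [walkCount, ← Finset.add_sum_erase _ _ (mem_removables.mpr (isRemovable_addCell ha)),
      removeCell_addCell ha]
  have hD : ∀ r ∈ μ.removables, walkCount (true :: w) (μ.removeCell r) =
      walkCount w μ + ∑ a ∈ (μ.removeCell r).addables.erase r,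
        walkCount w ((μ.removeCell r).addCell a) := fun r hr => by
    have hr := mem_removables.mp hr
    rw [walkCount, ← Finset.add_sum_erase _ _ (mem_addables.mpr (isAddable_removeCell hr)),
      addCell_removeCell hr]
  rw [walkCount, walkCount, Finset.sum_congr rfl hU, Finset.sum_congr rfl hD,
    Finset.sum_add_distrib, Finset.sum_add_distrib, sum_addables_sum_removables_erase,
    Finset.sum_const, Finset.sum_const, card_addables, smul_eq_mul, smul_eq_mul]
  ring

theorem walkCount_replicate_append_false (i j : ℕ) (μ : YoungDiagram) :
    walkCount (List.replicate i true ++ false :: List.replicate j true) μ =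
      walkCount (false :: List.replicate (i + j) true) μ +
        i * walkCount (List.replicate (i + j - 1) true) μ := by
  induction i generalizing j with
  | zero => simp
  | succ i ih =>
    have hswap := walkCount_append_of_eq_add (walkCount_true_false (List.replicate j true))
      (List.replicate i true) μ
    rw [← List.replicate_succ, ih, ← List.replicate_add] at hswap
    rw [List.replicate_succ', List.append_assoc, List.singleton_append, hswap,
      show i + (j + 1) = i + 1 + j by omega, show i + 1 + j - 1 = i + j by omega]
    ring

theorem walkCount_replicate_true_add_two (m : ℕ) (μ : YoungDiagram) :
    walkCount (List.replicate (m + 2) true) μ =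
      walkCount (List.replicate (m + 1) true) μ +
        ∑ r ∈ μ.removables, walkCount (List.replicate (m + 1) true) (μ.removeCell r) +
        (m + 1) * walkCount (List.replicate m true) μ := by
  have h := walkCount_replicate_append_false (m + 1) 0 μ
  rw [List.replicate_zero, Nat.add_zero, Nat.add_sub_cancel] at h
  rw [List.replicate_succ' (n := m + 1), walkCount_append_true, h, walkCount]
  ring

theorem walkCount_replicate_false_succ (j : ℕ) (μ : YoungDiagram) :
    walkCount (List.replicate (j + 1) false) μ =
      ∑ r ∈ μ.removables, walkCount (List.replicate j false) (μ.removeCell r) := rfl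

theorem walkCount_replicate_true_eq_sum_of_lt {m N : ℕ} (hN : m < N) (μ : YoungDiagram) :
    walkCount (List.replicate m true) μ = ∑ j ∈ Finset.range N,
      m.choose j * tInv (m - j) * walkCount (List.replicate j false) μ := by
  induction m using Nat.twoStepInduction generalizing N μ with
  | zero =>
    rw [Finset.sum_eq_single_of_mem 0 (Finset.mem_range.mpr hN) fun j _ hj => by
      simp [Nat.choose_eq_zero_of_lt (Nat.pos_of_ne_zero hj)]]
    simp [walkCount, tInv_zero]
  | one =>
    obtain ⟨N, rfl⟩ : ∃ N', N = N' + 2 := ⟨N - 2, by omega⟩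
    rw [Finset.sum_range_succ', Finset.sum_range_succ', Finset.sum_eq_zero fun j _ => by
      rw [Nat.choose_eq_zero_of_lt (by omega : 1 < j + 1 + 1), zero_mul, zero_mul]]
    simp [walkCount, card_addables, tInv_zero, tInv_one]
  | more m ih₀ ih₁ =>
    obtain ⟨N, rfl⟩ : ∃ N', N = N' + 1 := ⟨N - 1, by omega⟩
    have hremove : ∑ r ∈ μ.removables, ∑ j ∈ Finset.range (N + 1),
        (m + 1).choose j * tInv (m + 1 - j) * walkCount (List.replicate j false) (μ.removeCell r) =
        ∑ j ∈ Finset.range (N + 1),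
          (m + 1).choose j * tInv (m + 1 - j) * walkCount (List.replicate (j + 1) false) μ := by
      rw [Finset.sum_comm]
      simp only [← Finset.mul_sum, ← walkCount_replicate_false_succ]
    have hN₁ : m + 1 < N + 1 := by omega
    rw [walkCount_replicate_true_add_two, ih₁ hN₁, ih₀ (by omega : m < N + 1),
      Finset.sum_congr rfl fun r _ => ih₁ hN₁ (μ.removeCell r), hremove,
      sum_choose_mul_tInv_add_two (by omega)]

theorem walkCount_replicate_true (m : ℕ) (μ : YoungDiagram) :
    walkCount (List.replicate m true) μ =
      ∑ j ∈ Finset.range (m + 1),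
        m.choose j * tInv (m - j) * walkCount (List.replicate j false) μ :=
  walkCount_replicate_true_eq_sum_of_lt m.lt_succ_self μ

theorem walkCount_replicate_false_eq_zero {j : ℕ} {μ : YoungDiagram} (h : μ.card < j) :
    walkCount (List.replicate j false) μ = 0 := by
  induction j generalizing μ with
  | zero => omega
  | succ j ih =>
    refine Finset.sum_eq_zero fun r hr => ih ?_
    have hr := mem_removables.mp hr
    have : 0 < μ.card := Finset.card_pos.mpr ⟨r, hr.1⟩
    rw [card_removeCell hr]
    omega

def columnShape (c : ℕ) : YoungDiagram where
  cells := Finset.range c ×ˢ {0}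
  isLowerSet x y hxy hx := by
    simp only [Finset.coe_product, Finset.coe_range, Finset.coe_singleton, Set.mem_prod,
      Set.mem_Iio, Set.mem_singleton_iff] at hx ⊢
    exact ⟨lt_of_le_of_lt hxy.1 hx.1, Nat.le_zero.mp (hx.2 ▸ hxy.2)⟩

/-- The hook shape `(2, 1^c)`. -/
def hookShape (c : ℕ) : YoungDiagram where
  cells := insert (0, 1) (Finset.range (c + 1) ×ˢ {0})
  isLowerSet x y hxy hx := by
    obtain ⟨h₁, h₂⟩ : y.1 ≤ x.1 ∧ y.2 ≤ x.2 := ⟨hxy.1, hxy.2⟩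
    simp only [Finset.coe_insert, Set.mem_insert_iff, Finset.coe_product, Finset.coe_range,
      Set.mem_prod, Set.mem_Iio, Finset.coe_singleton, Set.mem_singleton_iff,
      Prod.ext_iff] at hx ⊢
    omega

theorem mem_columnShape {c : ℕ} {x : ℕ × ℕ} :
    x ∈ columnShape c ↔ x.1 < c ∧ x.2 = 0 := by
  rw [← mem_cells, columnShape, Finset.mem_product, Finset.mem_range, Finset.mem_singleton]

theorem mem_hookShape {c : ℕ} {x : ℕ × ℕ} :
    x ∈ hookShape c ↔ x = (0, 1) ∨ x.1 < c + 1 ∧ x.2 = 0 := by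
  rw [← mem_cells, hookShape, Finset.mem_insert, Finset.mem_product, Finset.mem_range,
    Finset.mem_singleton]

theorem card_columnShape (c : ℕ) : (columnShape c).card = c := by
  simp [YoungDiagram.card, columnShape]

theorem card_hookShape (c : ℕ) : (hookShape c).card = c + 2 := by
  simp [YoungDiagram.card, hookShape]

theorem removables_columnShape_succ (c : ℕ) : (columnShape (c + 1)).removables = {(c, 0)} := by
  ext ⟨i, j⟩
  simp only [mem_removables, IsRemovable, mem_columnShape, Finset.mem_singleton, Prod.mk.injEq]
  omega

theorem removables_hookShape_zero : (hookShape 0).removables = {(0, 1)} := by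
  ext ⟨i, j⟩
  simp only [mem_removables, IsRemovable, mem_hookShape, Finset.mem_singleton, Prod.mk.injEq]
  omega

theorem removables_hookShape_succ (c : ℕ) :
    (hookShape (c + 1)).removables = {(0, 1), (c + 1, 0)} := by
  ext ⟨i, j⟩
  simp only [mem_removables, IsRemovable, mem_hookShape, Finset.mem_insert,
    Finset.mem_singleton, Prod.mk.injEq]
  omega

theorem removeCell_columnShape_succ (c : ℕ) :
    (columnShape (c + 1)).removeCell (c, 0) = columnShape c := by
  have hr : (columnShape (c + 1)).IsRemovable (c, 0) := by
    rw [← mem_removables, removables_columnShape_succ]; exact Finset.mem_singleton_self _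
  ext ⟨i, j⟩
  simp only [mem_cells, mem_removeCell hr, mem_columnShape, ne_eq, Prod.mk.injEq]
  omega

theorem removeCell_hookShape_corner (c : ℕ) :
    (hookShape c).removeCell (0, 1) = columnShape (c + 1) := by
  have hr : (hookShape c).IsRemovable (0, 1) := by
    simp [IsRemovable, mem_hookShape]
  ext ⟨i, j⟩
  simp only [mem_cells, mem_removeCell hr, mem_hookShape, mem_columnShape, ne_eq, Prod.mk.injEq]
  omega

theorem removeCell_hookShape_succ (c : ℕ) :
    (hookShape (c + 1)).removeCell (c + 1, 0) = hookShape c := by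
  have hr : (hookShape (c + 1)).IsRemovable (c + 1, 0) := by
    simp [IsRemovable, mem_hookShape]
  ext ⟨i, j⟩
  simp only [mem_cells, mem_removeCell hr, mem_hookShape, ne_eq, Prod.mk.injEq]
  omega

theorem walkCount_replicate_false_columnShape {j c : ℕ} (h : j ≤ c) :
    walkCount (List.replicate j false) (columnShape c) = 1 := by
  induction j generalizing c with
  | zero => rfl
  | succ j ih =>
    obtain ⟨c, rfl⟩ : ∃ c', c = c' + 1 := ⟨c - 1, by omega⟩
    rw [walkCount_replicate_false_succ, removables_columnShape_succ, Finset.sum_singleton,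
      removeCell_columnShape_succ, ih (by omega)]

theorem walkCount_replicate_false_hookShape {j c : ℕ} (h : j ≤ c + 2) :
    walkCount (List.replicate j false) (hookShape c) = min (j + 1) (c + 1) := by
  induction j generalizing c with
  | zero => simp [walkCount]
  | succ j ih =>
    rw [walkCount_replicate_false_succ]
    cases c with
    | zero =>
      rw [removables_hookShape_zero, Finset.sum_singleton, removeCell_hookShape_corner,
        walkCount_replicate_false_columnShape (by omega)]
      omega
    | succ c =>
      rw [removables_hookShape_succ, Finset.sum_pair (by simp), removeCell_hookShape_corner,
        removeCell_hookShape_succ, walkCount_replicate_false_columnShape (by omega), ih (by omega)]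
      omega

def IsUpChain (m : ℕ) (μ : YoungDiagram) (g : ℕ → YoungDiagram) : Prop :=
  g 0 = μ ∧ (∀ i < m, ∃ a, (g i).IsAddable a ∧ g (i + 1) = (g i).addCell a) ∧
    ∀ i, m ≤ i → g i = g m

section UpChain

variable {m : ℕ} {μ : YoungDiagram} {g : ℕ → YoungDiagram}

theorem IsUpChain.monotone (hg : IsUpChain m μ g) : Monotone g := by
  refine monotone_nat_of_le_succ fun i => ?_
  rcases Nat.lt_or_ge i m with hi | hi
  · obtain ⟨a, ha, hstep⟩ := hg.2.1 i hi
    exact hstep ▸ le_addCell ha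
  · rw [hg.2.2 i hi, hg.2.2 (i + 1) (by omega)]

theorem IsUpChain.card_eq (hg : IsUpChain m μ g) {i : ℕ} (hi : i ≤ m) :
    (g i).card = μ.card + i := by
  induction i with
  | zero => rw [hg.1, Nat.add_zero]
  | succ i ih =>
    obtain ⟨a, ha, hstep⟩ := hg.2.1 i hi
    rw [hstep, card_addCell ha, ih (by omega), Nat.add_assoc]

theorem isUpChain_zero_iff : IsUpChain 0 μ g ↔ g = fun _ => μ :=
  ⟨fun hg => funext fun i => (hg.2.2 i i.zero_le).trans hg.1,
    fun hg => hg ▸ ⟨rfl, nofun, fun _ _ => rfl⟩⟩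

end UpChain

def consUpChain (m : ℕ) (μ : YoungDiagram) :
    (Σ a : μ.addables, {g // IsUpChain m (μ.addCell a) g}) → {g // IsUpChain (m + 1) μ g} :=
  fun p => ⟨fun | 0 => μ | i + 1 => p.2.1 i, rfl,
    fun | 0, _ => ⟨p.1, mem_addables.mp p.1.2, p.2.2.1⟩ | i + 1, hi => p.2.2.2.1 i (by omega),
    fun | i + 1, hi => p.2.2.2.2 i (by omega)⟩

theorem consUpChain_bijective (m : ℕ) (μ : YoungDiagram) :
    Function.Bijective (consUpChain m μ) := by
  constructor
  · rintro ⟨⟨a, ha⟩, g, hg⟩ ⟨⟨a', ha'⟩, g', hg'⟩ he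
    have he := congrArg Subtype.val he
    obtain rfl : a = a' := addCell_injective_of_isAddable (mem_addables.mp ha)
      (mem_addables.mp ha') (hg.1.symm.trans ((congrFun he 1).trans hg'.1))
    obtain rfl : g = g' := funext fun i => congrFun he (i + 1)
    rfl
  · rintro ⟨g, hg₀, hg, hstab⟩
    obtain ⟨a, ha, hstep⟩ := hg 0 (Nat.succ_pos m)
    rw [hg₀] at ha hstep
    refine ⟨⟨⟨a, mem_addables.mpr ha⟩, fun i => g (i + 1), hstep,
      fun i hi => hg (i + 1) (by omega), fun i hi => hstab (i + 1) (by omega)⟩, ?_⟩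
    exact Subtype.ext <| funext fun | 0 => hg₀.symm | _ + 1 => rfl

instance finite_isUpChain (m : ℕ) (μ : YoungDiagram) : Finite {g // IsUpChain m μ g} := by
  induction m generalizing μ with
  | zero => exact Finite.of_equiv _ (Equiv.subtypeEquivRight fun _ => isUpChain_zero_iff).symm
  | succ m ih => exact Finite.of_surjective _ (consUpChain_bijective m μ).2

theorem card_isUpChain (m : ℕ) (μ : YoungDiagram) :
    Nat.card {g // IsUpChain m μ g} = walkCount (List.replicate m true) μ := by
  induction m generalizing μ with
  | zero =>
    rw [Nat.card_congr (Equiv.subtypeEquivRight fun _ => isUpChain_zero_iff)]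
    simp [walkCount]
  | succ m ih =>
    rw [← Nat.card_eq_of_bijective _ (consUpChain_bijective m μ), Nat.card_sigma]
    simp only [ih]
    exact Finset.sum_coe_sort μ.addables fun a => walkCount (List.replicate m true) (μ.addCell a)

theorem eq_columnShape_of_notMem {μ : YoungDiagram} (h : (0, 1) ∉ μ) :
    μ = columnShape μ.card := by
  have hcol : ∀ x ∈ μ, x.2 = 0 := fun x hx => by
    by_contra hx₂
    exact h (μ.up_left_mem x.1.zero_le (Nat.one_le_iff_ne_zero.mpr hx₂) hx)
  have hcard : μ.card = μ.colLen 0 := by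
    rw [colLen_eq_card, YoungDiagram.card]
    congr 1
    ext x
    simp only [mem_col_iff, mem_cells, iff_self_and]
    exact hcol x
  ext ⟨i, j⟩
  rw [mem_cells, mem_cells, mem_columnShape, hcard]
  constructor
  · intro hx
    obtain rfl : j = 0 := hcol _ hx
    exact ⟨mem_iff_lt_colLen.mp hx, rfl⟩
  · rintro ⟨hi, rfl⟩
    exact mem_iff_lt_colLen.mpr hi

theorem exists_isAddable_of_le {μ ν : YoungDiagram} (hle : μ ≤ ν)
    (hcard : ν.card = μ.card + 1) :
    ∃ a, μ.IsAddable a ∧ ν = μ.addCell a := by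
  have hsub : μ.cells ⊆ ν.cells := hle
  obtain ⟨a, ha⟩ : ∃ a, ν.cells \ μ.cells = {a} := Finset.card_eq_one.mp <| by
    rw [Finset.card_sdiff_of_subset hsub]
    simp only [YoungDiagram.card] at hcard
    omega
  have haν : a ∈ ν := (Finset.mem_sdiff.mp (ha ▸ Finset.mem_singleton_self a)).1
  have haμ : a ∉ μ := (Finset.mem_sdiff.mp (ha ▸ Finset.mem_singleton_self a)).2
  have hmem : ∀ x ∈ ν, x ≠ a → x ∈ μ := fun x hx hne => by
    by_contra hxμ
    exact hne (Finset.mem_singleton.mp (ha ▸ Finset.mem_sdiff.mpr ⟨hx, hxμ⟩))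
  have hadd : μ.IsAddable a := by
    refine ⟨haμ, (Nat.eq_zero_or_pos a.1).imp_right fun hpos => ?_,
      (Nat.eq_zero_or_pos a.2).imp_right fun hpos => ?_⟩
    · exact hmem _ (ν.up_left_mem (Nat.sub_le _ _) le_rfl haν) fun he => by
        have := congrArg Prod.fst he; simp at this; omega
    · exact hmem _ (ν.up_left_mem le_rfl (Nat.sub_le _ _) haν) fun he => by
        have := congrArg Prod.snd he; simp at this; omega
  refine ⟨a, hadd, ?_⟩
  ext x
  rw [mem_cells, mem_cells, mem_addCell hadd]
  exact ⟨fun hx => or_iff_not_imp_left.mpr (hmem x hx),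
    fun hx => hx.elim (· ▸ haν) (@hle x)⟩

end YoungDiagram

open YoungDiagram

namespace SYT

variable {n k : ℕ}

theorem ext_chain {T U : SYT n} (h : T.chain = U.chain) : T = U := by
  cases T; cases U; cases h; rfl

theorem chain_eq_columnShape (T : SYT n) {j : ℕ} (hj : j ≤ n) (h : (0, 1) ∉ T.chain j) :
    T.chain j = columnShape j := by
  rw [eq_columnShape_of_notMem h, T.card_eq j hj]

theorem chain_eq_hookShape (T : SYT n) (hk : 2 ≤ k) (hkn : k ≤ n) (h₁ : (0, 1) ∈ T.chain k)
    (h₂ : (0, 1) ∉ T.chain (k - 1)) : T.chain k = hookShape (k - 2) := by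
  obtain ⟨a, ha, hstep⟩ := exists_isAddable_of_le (T.mono (Nat.sub_le k 1)) <| by
    rw [T.card_eq k hkn, T.card_eq (k - 1) (by omega)]; omega
  rw [hstep, mem_addCell ha] at h₁
  obtain rfl := h₁.resolve_right h₂
  rw [T.chain_eq_columnShape (by omega) h₂] at ha hstep
  ext ⟨i, j⟩
  simp only [mem_cells, hstep, mem_addCell ha, mem_columnShape, mem_hookShape, Prod.mk.injEq]
  omega

theorem isUpChain_chain_add (T : SYT n) (hkn : k ≤ n) :
    IsUpChain (n - k) (T.chain k) fun i => T.chain (k + i) := by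
  refine ⟨rfl, fun i hi => exists_isAddable_of_le (T.mono (Nat.le_succ _)) ?_, fun i hi => ?_⟩
  · rw [T.card_eq _ (by omega), T.card_eq _ (by omega)]; rfl
  · simp only [Nat.add_sub_cancel' hkn]
    exact T.stable _ (by omega)

def ofUpChain (hk : 2 ≤ k) (hkn : k ≤ n) (g : ℕ → YoungDiagram)
    (hg : IsUpChain (n - k) (hookShape (k - 2)) g) : SYT n where
  chain j := if j < k then columnShape j else g (j - k)
  mono := by
    refine monotone_nat_of_le_succ fun j => ?_
    by_cases hj : j + 1 < k
    · rw [if_pos (by omega), if_pos hj]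
      exact fun x hx => mem_columnShape.mpr (by have := mem_columnShape.mp hx; omega)
    by_cases hj' : j < k
    · rw [if_pos hj', if_neg hj, show j + 1 - k = 0 by omega, hg.1]
      exact fun x hx => mem_hookShape.mpr (by have := mem_columnShape.mp hx; omega)
    · rw [if_neg hj', if_neg hj, show j + 1 - k = j - k + 1 by omega]
      exact hg.monotone (Nat.le_succ _)
  card_eq j hj := by
    split_ifs with hjk
    · exact card_columnShape j
    · rw [hg.card_eq (by omega), card_hookShape]; omega
  stable j hj := by
    rw [if_neg (by omega), if_neg (by omega)]
    exact hg.2.2 _ (by omega)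

def equivUpChain (hk : 2 ≤ k) (hkn : k ≤ n) :
    {T : SYT n // (0, 1) ∈ T.chain k ∧ (0, 1) ∉ T.chain (k - 1)} ≃
      {g // IsUpChain (n - k) (hookShape (k - 2)) g} where
  toFun T := ⟨fun i => T.1.chain (k + i),
    T.1.chain_eq_hookShape hk hkn T.2.1 T.2.2 ▸ T.1.isUpChain_chain_add hkn⟩
  invFun g := ⟨ofUpChain hk hkn g.1 g.2, by
    simp only [ofUpChain]
    rw [if_neg (lt_irrefl k), if_pos (by omega), Nat.sub_self, g.2.1, mem_hookShape,
      mem_columnShape]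
    simp⟩
  left_inv T := Subtype.ext <| ext_chain <| funext fun j => by
    simp only [ofUpChain]
    split_ifs with hj
    · exact (T.1.chain_eq_columnShape (by omega) fun h => T.2.2 (T.1.mono (by omega) h)).symm
    · rw [Nat.add_sub_cancel' (by omega)]
  right_inv g := Subtype.ext <| funext fun i => by
    simp [ofUpChain]

end SYT

theorem f12_eq_walkCount {n k : ℕ} (hk : 2 ≤ k) (hkn : k ≤ n) :
    f12 n k = walkCount (List.replicate (n - k) true) (hookShape (k - 2)) := by
  rw [f12, Nat.card_congr (SYT.equivUpChain hk hkn), card_isUpChain]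

theorem f12_eq_sum {n k : ℕ} (hk : 2 ≤ k) (hn : 2 * k ≤ n) :
    f12 n k = ∑ j ∈ Finset.range (k + 1),
      (n - k).choose j * tInv (n - k - j) * min (j + 1) (k - 1) := by
  rw [f12_eq_walkCount hk (by omega), walkCount_replicate_true, ← Finset.sum_subset
    (Finset.range_subset_range.mpr (by omega : k + 1 ≤ n - k + 1)) fun j _ hj => by
      rw [walkCount_replicate_false_eq_zero (by rw [card_hookShape]; simp at hj; omega), mul_zero]]
  refine Finset.sum_congr rfl fun j hj => ?_
  rw [walkCount_replicate_false_hookShape (by simp at hj; omega), show k - 2 + 1 = k - 1 by omega]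

theorem f12_add_eq_sum {n k : ℕ} (hk : 2 ≤ k) (hn : 2 * k ≤ n) :
    f12 n k + (n - k).choose (k - 1) * tInv (n - 2 * k + 1) + (n - k).choose k * tInv (n - 2 * k) =
      ∑ j ∈ Finset.range k, (n - k).choose (k - j - 1) * tInv (n - 2 * k + j + 2) := by
  obtain ⟨K, rfl⟩ : ∃ K, k = K + 2 := ⟨k - 2, by omega⟩
  rw [f12_eq_sum hk hn, show K + 2 + 1 = K + 3 from rfl, show K + 2 - 1 = K + 1 from rfl,
    show n - 2 * (K + 2) + 1 = n - (K + 2) - (K + 1) by omega,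
    show n - 2 * (K + 2) = n - (K + 2) - (K + 2) by omega, sum_choose_mul_tInv_mul_min,
    ← Finset.sum_range_reflect]
  refine Finset.sum_congr rfl fun j hj => ?_
  simp only [Finset.mem_range] at hj
  rw [show K + 2 - 1 - j = K + 2 - j - 1 by omega,
    show n - (K + 2) - (K + 2 - j - 1) + 1 = n - (K + 2) - (K + 2) + j + 2 by omega]

/-- For `2 ≤ k` and `n ≥ 2k`,
`f(n,k) = Σ_{j=0}^{k−1} C(n−k, k−j−1)·t_{n−2k+j+2} − C(n−k, k−1)·t_{n−2k+1}
          − C(n−k, k)·t_{n−2k}`. -/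
theorem f12_explicit (n k : ℕ) (hk : 2 ≤ k) (hn : 2 * k ≤ n) :
    (f12 n k : ℤ) =
      (∑ j ∈ Finset.range k,
        (Nat.choose (n - k) (k - j - 1) * tInv (n - 2 * k + j + 2) : ℤ)) -
      (Nat.choose (n - k) (k - 1) * tInv (n - 2 * k + 1) : ℤ) -
      (Nat.choose (n - k) k * tInv (n - 2 * k) : ℤ) := by
  rw [sub_sub, eq_sub_iff_add_eq, ← add_assoc]
  exact_mod_cast f12_add_eq_sum hk hn
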